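/- Let A ∈ ℂ^{MN×N} be a weighting matrix, G ∈ ℂ^{MN×N} a deterministic mean matrix, Q ∈ ℂ^{MN×MN} Hermitian with Q − G P G^H positive definite, and P ∈ ℂ^{N×N} Hermitian PSD. Then log₂ det(I_N + P^{1/2} G^H A (A^H Q A)^{-1} A^H G P^{1/2}) (over A with A^H Q A invertible) is maximized by A = Q^{-1} G, with maximum value log₂ det(I_N + P^{1/2} G^H (Q − G P G^H)^{-1} G P^{1/2}). -/

import Mathlib

open Matrix ComplexOrder

/-- The positive semidefinite square root of a positive semidefinite matrix
(the definition of `Matrix.PosSemidef.sqrt` in older Mathlib). -/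
noncomputable def Matrix.PosSemidef.sqrt {n : Type*} {𝕜 : Type*} [Fintype n] [DecidableEq n]
    [RCLike 𝕜] {A : Matrix n n 𝕜} (hA : A.PosSemidef) : Matrix n n 𝕜 :=
  hA.1.eigenvectorUnitary.1 * diagonal ((↑) ∘ (√·) ∘ hA.1.eigenvalues) *
  (star hA.1.eigenvectorUnitary : Matrix n n 𝕜)

/-!
With `C = Q - G P Gᴴ` and `S = P^{1/2}`, the interference-plus-noise matrix is
`Aᴴ Q A - D Dᴴ = Aᴴ C A`, so the SE is `log₂ det (1 + (G S)ᴴ A (Aᴴ C A)⁻¹ Aᴴ (G S))`.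
The matrix `A (Aᴴ C A)⁻¹ Aᴴ` is dominated by `C⁻¹` in the Loewner order, and `det (1 + ·)` is
Loewner-monotone on positive semidefinite matrices, whence the bound. Equality holds as soon as
`C A = G Z` for some `Z`, since then `Gᴴ A (Aᴴ C A)⁻¹ Aᴴ G` and `Gᴴ C⁻¹ G` both equal
`Z⁻¹ᴴ (Aᴴ C A) Z⁻¹`; for `A = Q⁻¹ G` one has `C A = G (1 - P Gᴴ Q⁻¹ G)`.
-/

open scoped MatrixOrder

namespace Matrix

variable {m n 𝕜 : Type*} [Fintype m] [Fintype n] [DecidableEq n] [RCLike 𝕜]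

namespace PosSemidef

variable {A : Matrix n n 𝕜}

theorem sqrt_eq_cfcSqrt (hA : A.PosSemidef) : hA.sqrt = CFC.sqrt A := by
  rw [CFC.sqrt_eq_real_sqrt A hA.nonneg, cfcₙ_eq_cfc, hA.1.cfc_eq]
  rfl

theorem conjTranspose_sqrt (hA : A.PosSemidef) : hA.sqrtᴴ = hA.sqrt := by
  rw [sqrt_eq_cfcSqrt]
  exact (IsSelfAdjoint.of_nonneg (CFC.sqrt_nonneg A)).star_eq

theorem sqrt_mul_sqrt_self (hA : A.PosSemidef) : hA.sqrt * hA.sqrt = A := by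
  rw [sqrt_eq_cfcSqrt]
  exact CFC.sqrt_mul_sqrt_self A hA.nonneg

theorem one_le_of_mem_spectrum_one_add (hA : A.PosSemidef) {r : ℝ}
    (hr : r ∈ spectrum ℝ (1 + A)) : 1 ≤ r := by
  rw [← map_one (algebraMap ℝ (Matrix n n 𝕜)), ← spectrum.singleton_add_eq] at hr
  obtain ⟨_, rfl, μ, hμ, rfl⟩ := hr
  simpa using spectrum_nonneg_of_nonneg hA.nonneg hμ

theorem one_le_det_one_add (hA : A.PosSemidef) : 1 ≤ (1 + A).det := by
  have h1A := isHermitian_one.add hA.1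
  rw [h1A.det_eq_prod_eigenvalues, ← RCLike.ofReal_prod, ← RCLike.ofReal_one,
    RCLike.ofReal_le_ofReal]
  exact Finset.one_le_prod fun i _ =>
    hA.one_le_of_mem_spectrum_one_add (h1A.eigenvalues_mem_spectrum_real i)

end PosSemidef

theorem PosDef.det_le_det {X Y : Matrix n n 𝕜} (hX : X.PosDef) (hXY : X ≤ Y) :
    X.det ≤ Y.det := by
  set R := CFC.sqrt X
  have hRH : Rᴴ = R := (IsSelfAdjoint.of_nonneg (CFC.sqrt_nonneg X)).star_eq
  have hRR : R * R = X := CFC.sqrt_mul_sqrt_self X hX.posSemidef.nonneg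
  have hR : IsUnit R.det := by
    rw [← isUnit_iff_isUnit_det, CFC.isUnit_sqrt_iff X hX.posSemidef.nonneg]
    exact hX.isUnit
  have hZ : (R⁻¹ * (Y - X) * R⁻¹).PosSemidef := by
    simpa [conjTranspose_nonsing_inv, hRH] using hXY.mul_mul_conjTranspose_same R⁻¹
  have hY : R * (1 + R⁻¹ * (Y - X) * R⁻¹) * R = Y := by
    rw [Matrix.mul_add, Matrix.add_mul, Matrix.mul_one, hRR, Matrix.mul_assoc,
      Matrix.nonsing_inv_mul_cancel_right _ _ hR, Matrix.mul_nonsing_inv_cancel_left _ _ hR,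
      add_sub_cancel]
  set Z := R⁻¹ * (Y - X) * R⁻¹
  calc X.det ≤ X.det * (1 + Z).det :=
        le_mul_of_one_le_right hX.posSemidef.det_nonneg hZ.one_le_det_one_add
    _ = Y.det := by
        rw [← hY, det_mul, det_mul, ← hRR, det_mul]
        ring

theorem PosSemidef.logb_det_one_add_re_le {X Y : Matrix n n ℂ} (hX : X.PosSemidef)
    (hXY : X ≤ Y) {b : ℝ} (hb : 1 < b) :
    Real.logb b (1 + X).det.re ≤ Real.logb b (1 + Y).det.re := by
  have h1X : (1 + X).PosDef := PosDef.one.add_posSemidef hX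
  have hdet := h1X.det_le_det (add_le_add_right hXY 1)
  exact Real.logb_le_logb_of_le hb (by simpa using (Complex.lt_def.mp h1X.det_pos).1)
    (Complex.le_def.mp hdet).1

theorem mulVec_injective_of_isUnit_mul {R : Type*} [CommRing R] {B : Matrix n m R}
    {A : Matrix m n R} (h : IsUnit (B * A)) : Function.Injective A.mulVec := by
  refine Function.Injective.of_comp (f := B.mulVec) ?_
  convert mulVec_injective_of_isUnit h using 1
  funext x
  exact mulVec_mulVec x B A

theorem PosDef.conjTranspose_mul_mul_same_of_isUnit {C Q : Matrix m m 𝕜} (hC : C.PosDef)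
    {A : Matrix m n 𝕜} (hA : IsUnit (Aᴴ * Q * A)) : (Aᴴ * C * A).PosDef :=
  hC.conjTranspose_mul_mul_same (mulVec_injective_of_isUnit_mul hA)

omit [DecidableEq n] in
theorem conjTranspose_mul_mul_le_conjTranspose_mul_mul {X Y : Matrix m m 𝕜} (hXY : X ≤ Y)
    (B : Matrix m n 𝕜) : Bᴴ * X * B ≤ Bᴴ * Y * B := by
  rw [le_iff] at hXY ⊢
  simpa [Matrix.mul_sub, Matrix.sub_mul] using hXY.conjTranspose_mul_mul_same B

noncomputable def compressInv (C : Matrix m m 𝕜) (A : Matrix m n 𝕜) : Matrix m m 𝕜 :=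
  A * (Aᴴ * C * A)⁻¹ * Aᴴ

variable {C : Matrix m m 𝕜} {A : Matrix m n 𝕜}

theorem PosDef.compressInv_posSemidef (hK : (Aᴴ * C * A).PosDef) :
    (compressInv C A).PosSemidef := by
  simpa [compressInv] using hK.inv.posSemidef.mul_mul_conjTranspose_same A

theorem PosDef.compressInv_le_inv [DecidableEq m] (hC : C.PosDef) (hK : IsUnit (Aᴴ * C * A)) :
    compressInv C A ≤ C⁻¹ := by
  have hKd : IsUnit (Aᴴ * C * A).det := (isUnit_iff_isUnit_det _).mp hK
  have hCd : IsUnit C.det := (isUnit_iff_isUnit_det _).mp hC.isUnit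
  set W := C⁻¹ - compressInv C A with hW
  have hWH : Wᴴ = W := by
    simp [W, compressInv, conjTranspose_nonsing_inv, hC.1.eq, Matrix.mul_assoc]
  -- `Aᴴ C W = 0` makes `W` idempotent for the form `C`, so that `W = Wᴴ C W ≥ 0`
  have hAW : Aᴴ * C * W = 0 := by
    have hK' : Aᴴ * C * compressInv C A = Aᴴ := by
      simp only [compressInv, ← Matrix.mul_assoc]
      rw [Matrix.mul_nonsing_inv _ hKd, Matrix.one_mul]
    rw [hW, Matrix.mul_sub, Matrix.mul_nonsing_inv_cancel_right _ _ hCd, hK', sub_self]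
  have hWCW : W * C * W = W := calc
    W * C * W = C⁻¹ * C * W - A * (Aᴴ * C * A)⁻¹ * (Aᴴ * C * W) := by
      simp only [hW, compressInv, Matrix.sub_mul, Matrix.mul_assoc]
    _ = W := by
      rw [hAW, Matrix.nonsing_inv_mul _ hCd, Matrix.mul_zero, sub_zero, Matrix.one_mul]
  rw [le_iff, ← hW, ← hWCW]
  nth_rewrite 1 [← hWH]
  exact hC.posSemidef.conjTranspose_mul_mul_same W

theorem conjTranspose_mul_compressInv_mul_eq_of_mul_eq [DecidableEq m] {G : Matrix m n 𝕜}
    {Z : Matrix n n 𝕜} (hC : C.IsHermitian) (hCu : IsUnit C) (hK : IsUnit (Aᴴ * C * A))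
    (hCA : C * A = G * Z) : Gᴴ * compressInv C A * G = Gᴴ * C⁻¹ * G := by
  have hKd : IsUnit (Aᴴ * C * A).det := (isUnit_iff_isUnit_det _).mp hK
  have hCd : IsUnit C.det := (isUnit_iff_isUnit_det _).mp hCu
  have hZd : IsUnit Z.det := by
    rw [Matrix.mul_assoc, hCA, ← Matrix.mul_assoc, isUnit_iff_isUnit_det, det_mul] at hK
    exact isUnit_of_mul_isUnit_right hK
  have hG : G = C * A * Z⁻¹ := by rw [hCA, Matrix.mul_nonsing_inv_cancel_right _ _ hZd]
  have hGH : Gᴴ = Z⁻¹ᴴ * (Aᴴ * C) := by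
    rw [hG, conjTranspose_mul, conjTranspose_mul, hC.eq]
  calc Gᴴ * compressInv C A * G
      = Z⁻¹ᴴ * ((Aᴴ * C * A) * (Aᴴ * C * A)⁻¹ * (Aᴴ * C * A)) * Z⁻¹ := by
        rw [hGH, compressInv]; nth_rewrite 1 [hG]; simp only [Matrix.mul_assoc]
    _ = Z⁻¹ᴴ * (Aᴴ * C * (C⁻¹ * C) * A) * Z⁻¹ := by
        rw [Matrix.mul_nonsing_inv _ hKd, Matrix.nonsing_inv_mul _ hCd, Matrix.one_mul,
          Matrix.mul_one]
    _ = Gᴴ * C⁻¹ * G := by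
        rw [hGH]; nth_rewrite 1 [hG]; simp only [Matrix.mul_assoc]

theorem conjTranspose_mul_inv_sub_mul_eq_compressInv (Q : Matrix m m 𝕜) (G : Matrix m n 𝕜)
    {S : Matrix n n 𝕜} (hS : Sᴴ = S) :
    (Aᴴ * G * S)ᴴ * (Aᴴ * Q * A - (Aᴴ * G * S) * (Aᴴ * G * S)ᴴ)⁻¹ * (Aᴴ * G * S) =
      (G * S)ᴴ * compressInv (Q - G * (S * S) * Gᴴ) A * (G * S) := by
  have hSigma : Aᴴ * Q * A - (Aᴴ * G * S) * (Aᴴ * G * S)ᴴ =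
      Aᴴ * (Q - G * (S * S) * Gᴴ) * A := by
    simp only [conjTranspose_mul, conjTranspose_conjTranspose, hS, Matrix.mul_sub,
      Matrix.sub_mul, Matrix.mul_assoc]
  rw [hSigma, compressInv]
  simp only [conjTranspose_mul, conjTranspose_conjTranspose, Matrix.mul_assoc]

end Matrix

/-- Optimal LSFD weighting (deterministic form of Theorem 2): with `D = Aᴴ G P^{1/2}`
and `Σ = Aᴴ Q A − D Dᴴ`, the SE `log₂ det(I + Dᴴ Σ⁻¹ D)` is maximized over `A` with
`Aᴴ Q A` invertible by `A = Q⁻¹ G`, with maximum value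
`log₂ det(I + P^{1/2} Gᴴ (Q − G P Gᴴ)⁻¹ G P^{1/2})`. -/
theorem stmt15 (M N : ℕ) (G : Matrix (Fin M × Fin N) (Fin N) ℂ)
    (Q : Matrix (Fin M × Fin N) (Fin M × Fin N) ℂ) (hQ : Q.IsHermitian)
    (P : Matrix (Fin N) (Fin N) ℂ) (hP : P.PosSemidef)
    (hdiff : (Q - G * P * Gᴴ).PosDef)
    (hGQG : IsUnit (Gᴴ * Q⁻¹ * G)) :
    (∀ A : Matrix (Fin M × Fin N) (Fin N) ℂ, IsUnit (Aᴴ * Q * A) →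
      Real.logb 2
        ((1 + (Aᴴ * G * hP.sqrt)ᴴ *
            (Aᴴ * Q * A - (Aᴴ * G * hP.sqrt) * (Aᴴ * G * hP.sqrt)ᴴ)⁻¹ *
            (Aᴴ * G * hP.sqrt)).det.re) ≤
      Real.logb 2 ((1 + hP.sqrt * Gᴴ * (Q - G * P * Gᴴ)⁻¹ * G * hP.sqrt).det.re)) ∧
    Real.logb 2
      ((1 + ((Q⁻¹ * G)ᴴ * G * hP.sqrt)ᴴ *
          ((Q⁻¹ * G)ᴴ * Q * (Q⁻¹ * G) -
            ((Q⁻¹ * G)ᴴ * G * hP.sqrt) * ((Q⁻¹ * G)ᴴ * G * hP.sqrt)ᴴ)⁻¹ *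
          ((Q⁻¹ * G)ᴴ * G * hP.sqrt)).det.re) =
    Real.logb 2 ((1 + hP.sqrt * Gᴴ * (Q - G * P * Gᴴ)⁻¹ * G * hP.sqrt).det.re) := by
  set S := hP.sqrt
  set C := Q - G * P * Gᴴ
  have hS : Sᴴ = S := hP.conjTranspose_sqrt
  have hSE (A : Matrix (Fin M × Fin N) (Fin N) ℂ) :=
    hP.sqrt_mul_sqrt_self ▸ conjTranspose_mul_inv_sub_mul_eq_compressInv Q G (A := A) hS
  have hRHS : S * Gᴴ * C⁻¹ * G * S = (G * S)ᴴ * C⁻¹ * (G * S) := by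
    simp only [conjTranspose_mul, hS, Matrix.mul_assoc]
  simp only [hSE, hRHS]
  refine ⟨fun A hA => ?_, ?_⟩
  · have hK := hdiff.conjTranspose_mul_mul_same_of_isUnit hA
    exact (hK.compressInv_posSemidef.conjTranspose_mul_mul_same _).logb_det_one_add_re_le
      (conjTranspose_mul_mul_le_conjTranspose_mul_mul (hdiff.compressInv_le_inv hK.isUnit) _)
      one_lt_two
  · have hQu : IsUnit Q.det := (isUnit_iff_isUnit_det _).mp <| by
      simpa [C] using (hdiff.add_posSemidef (hP.mul_mul_conjTranspose_same G)).isUnit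
    have hA₀ : (Q⁻¹ * G)ᴴ * Q * (Q⁻¹ * G) = Gᴴ * Q⁻¹ * G := by
      rw [conjTranspose_mul, conjTranspose_nonsing_inv, hQ.eq, Matrix.mul_assoc,
        Matrix.mul_assoc, Matrix.mul_nonsing_inv_cancel_left _ _ hQu, Matrix.mul_assoc]
    have hCA₀ : C * (Q⁻¹ * G) = G * (1 - P * (Gᴴ * Q⁻¹ * G)) := by
      rw [Matrix.sub_mul, Matrix.mul_nonsing_inv_cancel_left _ _ hQu, Matrix.mul_sub,
        Matrix.mul_one]
      simp only [Matrix.mul_assoc]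
    have hK₀ := hdiff.conjTranspose_mul_mul_same_of_isUnit (hA₀ ▸ hGQG)
    have hGS (X : Matrix (Fin M × Fin N) (Fin M × Fin N) ℂ) :
        (G * S)ᴴ * X * (G * S) = Sᴴ * (Gᴴ * X * G) * S := by
      simp only [conjTranspose_mul, Matrix.mul_assoc]
    rw [hGS, hGS,
      conjTranspose_mul_compressInv_mul_eq_of_mul_eq hdiff.1 hdiff.isUnit hK₀.isUnit hCA₀]
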